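/- For the Hahn spin chain with β = α+1, the end-to-end correlation at time t = π/2 equals f_{2m+1,0}(π/2) = i(-1)^m sin(πα). Consequently |f_{2m+1,0}(π/2)| = 1 (perfect state transfer) if and only if α is a half-odd-integer, i.e., α ∈ {-1/2, 1/2, 3/2, 5/2, …} (given α > -1). -/

import Mathlib

open Finset Matrix

/-- Pochhammer symbol `(a)_k = a(a+1)⋯(a+k-1)`. -/
noncomputable def poch (a : ℝ) (k : ℕ) : ℝ := ∏ i ∈ Finset.range k, (a + i)

/-- The Hahn polynomial `Q_n(x;α,β,m)` as a terminating ₃F₂ series. -/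
noncomputable def hahnQ (n : ℕ) (x α β : ℝ) (m : ℕ) : ℝ :=
  ∑ k ∈ Finset.range (n + 1),
    poch (-(n : ℝ)) k * poch ((n : ℝ) + α + β + 1) k * poch (-x) k /
      ((k.factorial : ℝ) * poch (α + 1) k * poch (-(m : ℝ)) k)

/-- The Hahn weight `w(x;α,β,m) = C(α+x,x) C(m+β-x,m-x)`. -/
noncomputable def hahnW (x : ℕ) (α β : ℝ) (m : ℕ) : ℝ :=
  (poch (α + 1) x / (x.factorial : ℝ)) * (poch (β + 1) (m - x) / ((m - x).factorial : ℝ))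

/-- The squared norm `h_n(α,β,m)` of the Hahn polynomials. -/
noncomputable def hahnH (n : ℕ) (α β : ℝ) (m : ℕ) : ℝ :=
  ((-1 : ℝ) ^ n * poch ((n : ℝ) + α + β + 1) (m + 1) * poch (β + 1) n * (n.factorial : ℝ)) /
    ((2 * (n : ℝ) + α + β + 1) * poch (α + 1) n * poch (-(m : ℝ)) n * (m.factorial : ℝ))

/-- Orthonormal Hahn function `Q̃_n(x;α,β,m)`. -/
noncomputable def hahnQt (n x : ℕ) (α β : ℝ) (m : ℕ) : ℝ :=
  Real.sqrt (hahnW x α β m) * hahnQ n (x : ℝ) α β m / Real.sqrt (hahnH n α β m)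

/-- The matrix `U` of eigenvectors, built from Hahn polynomials with
parameters `(α,β)` (even rows) and `(α+1,β-1)` (odd rows). -/
noncomputable def hahnU (α β : ℝ) (m : ℕ) : Matrix (Fin (2 * m + 2)) (Fin (2 * m + 2)) ℝ :=
  Matrix.of fun r c =>
    let i : ℕ := (r : ℕ) / 2
    let j : ℕ := if (c : ℕ) ≤ m then m - (c : ℕ) else (c : ℕ) - m - 1
    if (r : ℕ) % 2 = 0 then
      ((-1 : ℝ) ^ i / Real.sqrt 2) * hahnQt j i α β m
    else
      (if (c : ℕ) ≤ m then (-1 : ℝ) else 1) * ((-1 : ℝ) ^ i / Real.sqrt 2)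
        * hahnQt j i (α + 1) (β - 1) m

/-- The spin chain couplings `J_k`. -/
noncomputable def hahnJ (α β : ℝ) (m : ℕ) (k : ℕ) : ℝ :=
  if k % 2 = 1 then Real.sqrt (((k : ℝ) + 1) * ((2 * m + 1 : ℝ) - k))
  else Real.sqrt (((k : ℝ) + 2 * α + 2) * ((2 * m : ℝ) + 2 * β - k))

/-- The tridiagonal single-excitation interaction matrix `M`. -/
noncomputable def hahnM (α β : ℝ) (m : ℕ) : Matrix (Fin (2 * m + 2)) (Fin (2 * m + 2)) ℝ :=
  Matrix.of fun r c =>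
    if (r : ℕ) + 1 = (c : ℕ) then hahnJ α β m r
    else if (c : ℕ) + 1 = (r : ℕ) then hahnJ α β m c
    else 0

/-- The eigenvalues `ε_{m-k} = -2√((α+k+1)(β+k))`, `ε_{m+k+1} = 2√((α+k+1)(β+k))`. -/
noncomputable def hahnEps (α β : ℝ) (m : ℕ) (c : Fin (2 * m + 2)) : ℝ :=
  if (c : ℕ) ≤ m then
    -2 * Real.sqrt ((α + (m - (c : ℕ) : ℕ) + 1) * (β + (m - (c : ℕ) : ℕ)))
  else
    2 * Real.sqrt ((α + ((c : ℕ) - m - 1 : ℕ) + 1) * (β + ((c : ℕ) - m - 1 : ℕ)))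

/-- The correlation function `f_{r,s}(t)`. -/
noncomputable def hahnCorr (α β : ℝ) (m : ℕ) (r s : Fin (2 * m + 2)) (t : ℝ) : ℂ :=
  ∑ j : Fin (2 * m + 2),
    ((hahnU α β m r j * hahnU α β m s j : ℝ) : ℂ)
      * Complex.exp (-Complex.I * t * (hahnEps α β m j : ℝ))

/-!
The first and last rows of `U` are the two orthonormal Hahn families evaluated at the endpoints
`x = 0` and `x = m`, and the eigenvalues come in pairs `±λ_j`, so
`f_{2m+1,0}(t) = -i (-1)^m ∑_j Q̃_j(m; α+1, β-1) Q̃_j(0; α, β) sin(t λ_j)`.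
For `β = α + 1` one has `λ_j = 2(α + j + 1)`, so at `t = π/2` every sine equals
`-(-1)^j sin(πα)`, and it remains to show `∑_j (-1)^j Q̃_j(m; α+1, α) Q̃_j(0; α, α+1) = 1`.
Chu–Vandermonde evaluates `Q_j` at `x = m`, making the `j`-th term
`2 (α+1)_{m+1} C(m,j) / (2α+2+j)_{m+1}`, and
`∑_j C(m,j) / (a+j)_{m+1} = 1 / (2 (a/2)_{m+1})` follows by induction on `m` from the partial
fraction `1/(b)_{n+1} - 1/(b+1)_{n+1} = (n+1)/(b)_{n+2}`.
-/

section Pochhammer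

open Polynomial

@[simp] lemma poch_zero (a : ℝ) : poch a 0 = 1 := rfl

lemma poch_eq_ascPochhammer_eval (a : ℝ) (k : ℕ) : poch a k = (ascPochhammer ℝ k).eval a := by
  induction k with
  | zero => simp
  | succ k ih => rw [ascPochhammer_succ_eval, ← ih, poch, prod_range_succ, poch]

lemma poch_succ (a : ℝ) (k : ℕ) : poch a (k + 1) = poch a k * (a + k) := by
  simp only [poch_eq_ascPochhammer_eval, ascPochhammer_succ_eval]

lemma poch_succ_left (a : ℝ) (k : ℕ) : poch a (k + 1) = a * poch (a + 1) k := by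
  simp [poch_eq_ascPochhammer_eval, ascPochhammer_succ_left, eval_comp]

lemma poch_pos {a : ℝ} (ha : 0 < a) (k : ℕ) : 0 < poch a k := by
  rw [poch_eq_ascPochhammer_eval]; exact ascPochhammer_pos k a ha

lemma poch_add (a : ℝ) (j k : ℕ) : poch a (j + k) = poch a j * poch (a + j) k := by
  simp [poch_eq_ascPochhammer_eval, ← ascPochhammer_mul, eval_comp]

lemma poch_neg (a : ℝ) (k : ℕ) : poch (-a) k = (-1) ^ k * poch (a - k + 1) k := by
  rw [poch_eq_ascPochhammer_eval, ascPochhammer_eval_neg_eq_descPochhammer,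
    descPochhammer_eval_eq_ascPochhammer, poch_eq_ascPochhammer_eval]

lemma poch_neg_natCast (j k : ℕ) : poch (-j) k = (-1) ^ k * j.choose k * k.factorial := by
  rw [poch_eq_ascPochhammer_eval, ascPochhammer_eval_neg_eq_descPochhammer,
    descPochhammer_eval_eq_descFactorial, Nat.descFactorial_eq_factorial_mul_choose]
  push_cast; ring

lemma descPochhammer_eval_eq_poch (x : ℝ) (k : ℕ) :
    (descPochhammer ℝ k).eval x = poch (x - k + 1) k := by
  rw [descPochhammer_eval_eq_ascPochhammer, poch_eq_ascPochhammer_eval]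

lemma descPochhammer_eval_add {R : Type*} [CommRing R] (x y : R) (n : ℕ) :
    (descPochhammer R n).eval (x + y) = ∑ k ∈ range (n + 1),
      n.choose k * ((descPochhammer R k).eval x * (descPochhammer R (n - k)).eval y) := by
  have h (i : ℕ) (r : R) : (descPochhammer R i).eval r = (descPochhammer ℤ i).smeval r := by
    rw [← aeval_eq_smeval, ← eval_map_algebraMap, algebraMap_int_eq, descPochhammer_map]
  simp only [h, Ring.descPochhammer_smeval_add n (Commute.all x y),
    Nat.sum_antidiagonal_eq_sum_range_succ (fun i j => (n.choose i : R) *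
      ((descPochhammer ℤ i).smeval x * (descPochhammer ℤ j).smeval y))]

end Pochhammer

lemma chu_vandermonde {c : ℝ} (hc : 0 < c) (b : ℝ) (j : ℕ) :
    ∑ k ∈ range (j + 1), poch (-j) k * poch b k / (k.factorial * poch c k) =
      poch (c - b) j / poch c j := by
  -- Times `(c)_j`, the `k`-th term is `C(j,k) (-b)↓k (c+j-1)↓(j-k)` in falling factorials,
  -- so the sum is a Vandermonde convolution.
  rw [eq_div_iff (poch_pos hc j).ne', sum_mul, show c - b = -b + (c + j - 1) - j + 1 by ring,
    ← descPochhammer_eval_eq_poch, descPochhammer_eval_add]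
  refine sum_congr rfl fun k hk => ?_
  have hkj : k ≤ j := Nat.lt_succ_iff.mp (mem_range.mp hk)
  have hsplit : poch c j = poch c k * poch (c + k) (j - k) := by
    rw [← poch_add, Nat.add_sub_cancel' hkj]
  have hb : (descPochhammer ℝ k).eval (-b) = (-1) ^ k * poch b k := by
    rw [descPochhammer_eval_eq_poch, show -b - k + 1 = -(b + k - 1) by ring, poch_neg]
    ring_nf
  have hc' : (descPochhammer ℝ (j - k)).eval (c + j - 1) = poch (c + k) (j - k) := by
    rw [descPochhammer_eval_eq_poch, Nat.cast_sub hkj]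
    ring_nf
  have := (poch_pos hc k).ne'
  rw [hsplit, poch_neg_natCast, hb, hc']
  field_simp

lemma inv_poch_sub_inv_poch {b : ℝ} (hb : 0 < b) (n : ℕ) :
    (poch b (n + 1))⁻¹ - (poch (b + 1) (n + 1))⁻¹ = (n + 1) / poch b (n + 2) := by
  have h₁ := poch_succ_left b (n + 1)
  have h₂ := poch_succ b (n + 1)
  have := (poch_pos hb (n + 1)).ne'
  have := (poch_pos (by linarith : 0 < b + 1) (n + 1)).ne'
  have := (poch_pos hb (n + 2)).ne'
  field_simp
  push_cast at h₂
  linear_combination poch (b + 1) (n + 1) * h₂ - poch b (n + 1) * h₁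

lemma sum_choose_div_poch (m : ℕ) {a : ℝ} (ha : 0 < a) :
    ∑ j ∈ range (m + 1), m.choose j / poch (a + j) (m + 1) =
      (2 * poch (a / 2) (m + 1))⁻¹ := by
  induction m generalizing a with
  | zero => simp [poch_succ]; field_simp
  | succ m ih =>
    have hstep {x : ℝ} (hx : 0 < x) :
        ∑ j ∈ range (m + 1), m.choose j * (poch (x + j) (m + 2))⁻¹ =
          (∑ j ∈ range (m + 1), m.choose j / poch (x + j) (m + 1) -
            ∑ j ∈ range (m + 1), m.choose j / poch (x + 1 + j) (m + 1)) / (m + 1) := by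
      rw [← sum_sub_distrib, sum_div]
      refine sum_congr rfl fun j _ => ?_
      rw [add_right_comm, div_eq_mul_inv _ (poch _ _), div_eq_mul_inv _ (poch _ _), ← mul_sub,
        inv_poch_sub_inv_poch (by positivity)]
      field_simp
    have hpascal := sum_choose_succ_mul (fun i _ => (poch (a + i) (m + 2))⁻¹) m
    simp only [Nat.cast_add_one, ← add_assoc, add_right_comm a _ 1] at hpascal
    calc ∑ j ∈ range (m + 2), ((m + 1).choose j : ℝ) * (poch (a + j) (m + 2))⁻¹
        = (∑ j ∈ range (m + 1), m.choose j / poch (a + j) (m + 1) -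
            ∑ j ∈ range (m + 1), m.choose j / poch (a + 2 + j) (m + 1)) / (m + 1) := by
          rw [hpascal, hstep ha, hstep (by linarith), ← add_div, sub_add_sub_cancel,
            add_assoc a 1 1, one_add_one_eq_two]
      _ = ((2 * poch (a / 2) (m + 1))⁻¹ - (2 * poch (a / 2 + 1) (m + 1))⁻¹) / (m + 1) := by
          rw [ih ha, ih (by linarith), show (a + 2) / 2 = a / 2 + 1 by ring]
      _ = (2 * poch (a / 2) (m + 2))⁻¹ := by
          rw [mul_inv, mul_inv, ← mul_sub, inv_poch_sub_inv_poch (by positivity)]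
          field_simp

lemma hahnQ_at_zero (n : ℕ) (α β : ℝ) (m : ℕ) : hahnQ n 0 α β m = 1 := by
  rw [hahnQ, sum_eq_single_of_mem 0 (mem_range.2 n.succ_pos)]
  · simp
  · intro k _ hk
    obtain ⟨l, rfl⟩ := Nat.exists_eq_succ_of_ne_zero hk
    simp [poch_succ_left]

lemma hahnQ_at_m {j m : ℕ} (hj : j ≤ m) {α : ℝ} (hα : -1 < α) (β : ℝ) :
    hahnQ j m α β m = (-1) ^ j * poch (β + 1) j / poch (α + 1) j := by
  have hcancel : ∀ k ∈ range (j + 1),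
      poch (-j) k * poch (j + α + β + 1) k * poch (-m) k /
          (k.factorial * poch (α + 1) k * poch (-m) k) =
        poch (-j) k * poch (j + α + β + 1) k / (k.factorial * poch (α + 1) k) := by
    intro k hk
    have : (m.choose k : ℝ) ≠ 0 := by
      exact_mod_cast (Nat.choose_pos (by have := mem_range.mp hk; omega)).ne'
    rw [mul_div_mul_right _ _ (by rw [poch_neg_natCast]; positivity)]
  rw [hahnQ, sum_congr rfl hcancel, chu_vandermonde (by linarith),
    show α + 1 - (j + α + β + 1) = -(j + β) by ring, poch_neg,
    show (j : ℝ) + β - j + 1 = β + 1 by ring]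

lemma hahnW_at_zero (α β : ℝ) (m : ℕ) : hahnW 0 α β m = poch (β + 1) m / m.factorial := by
  simp [hahnW]

lemma hahnW_at_m (α β : ℝ) (m : ℕ) : hahnW m α β m = poch (α + 1) m / m.factorial := by
  simp [hahnW]

lemma hahnH_eq (n m : ℕ) (α β : ℝ) :
    hahnH n α β m = poch (n + α + β + 1) (m + 1) * poch (β + 1) n /
      ((2 * n + α + β + 1) * poch (α + 1) n * m.choose n * m.factorial) := by
  have hu : ((-1 : ℝ) ^ n * n.factorial) ≠ 0 := by positivity
  rw [← mul_div_mul_right _ _ hu, hahnH, poch_neg_natCast]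
  ring

lemma hahnH_pos {n m : ℕ} (hn : n ≤ m) {α β : ℝ} (hα : -1 < α) (hβ : -1 < β)
    (hαβ : 0 < α + β + 1) : 0 < hahnH n α β m := by
  have := poch_pos (a := n + α + β + 1) (by linarith [n.cast_nonneg (α := ℝ)]) (m + 1)
  have : 0 < 2 * (n : ℝ) + α + β + 1 := by linarith [n.cast_nonneg (α := ℝ)]
  rw [hahnH_eq]
  have := Nat.choose_pos hn
  have := poch_pos (a := α + 1) (by linarith) n
  have := poch_pos (a := β + 1) (by linarith) n
  positivity

lemma hahnH_mul_hahnH (n m : ℕ) {α : ℝ} (hα : -1 < α) :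
    hahnH n (α + 1) α m * hahnH n α (α + 1) m =
      (poch (2 * α + 2 + n) (m + 1) / ((2 * n + 2 * α + 2) * m.choose n * m.factorial)) ^ 2 := by
  have := (poch_pos (a := α + 1) (by linarith) n).ne'
  have := (poch_pos (a := α + 1 + 1) (by linarith) n).ne'
  rw [hahnH_eq, hahnH_eq, show (n : ℝ) + (α + 1) + α + 1 = 2 * α + 2 + n by ring,
    show (n : ℝ) + α + (α + 1) + 1 = 2 * α + 2 + n by ring,
    show 2 * (n : ℝ) + (α + 1) + α + 1 = 2 * n + 2 * α + 2 by ring,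
    show 2 * (n : ℝ) + α + (α + 1) + 1 = 2 * n + 2 * α + 2 by ring]
  field_simp

lemma neg_one_pow_mul_hahnQt_mul_hahnQt {n m : ℕ} (hn : n ≤ m) {α : ℝ} (hα : -1 < α) :
    (-1) ^ n * hahnQt n m (α + 1) α m * hahnQt n 0 α (α + 1) m =
      2 * poch (α + 1) (m + 1) * (m.choose n / poch (2 * α + 2 + n) (m + 1)) := by
  have hn' : (0 : ℝ) ≤ n := n.cast_nonneg
  have hP := poch_pos (a := 2 * α + 2 + n) (by linarith) (m + 1)
  have hD : 0 < (2 * n + 2 * α + 2) * m.choose n * m.factorial :=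
    mul_pos (mul_pos (by linarith) (by exact_mod_cast Nat.choose_pos hn)) (by positivity)
  have hsqrt : √(hahnH n (α + 1) α m) * √(hahnH n α (α + 1) m) =
      poch (2 * α + 2 + n) (m + 1) / ((2 * n + 2 * α + 2) * m.choose n * m.factorial) := by
    rw [← Real.sqrt_mul (hahnH_pos hn (by linarith) hα (by linarith)).le, hahnH_mul_hahnH n m hα,
      Real.sqrt_sq (div_pos hP hD).le]
  have hW : hahnW m (α + 1) α m = hahnW 0 α (α + 1) m := by rw [hahnW_at_m, hahnW_at_zero]
  have hW_nonneg : 0 ≤ hahnW 0 α (α + 1) m := by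
    rw [hahnW_at_zero]; exact div_nonneg (poch_pos (by linarith) m).le (Nat.cast_nonneg _)
  have hQ : (-1) ^ n * hahnQ n m (α + 1) α m = poch (α + 1) n / poch (α + 1 + 1) n := by
    rw [hahnQ_at_m hn (by linarith), ← mul_div_assoc, ← mul_assoc, ← pow_add, ← two_mul, pow_mul,
      neg_one_sq, one_pow, one_mul]
  have h₁ : poch (α + 1) n * (α + 1 + n) = (α + 1) * poch (α + 1 + 1) n := by
    rw [← poch_succ, ← poch_succ_left]
  have := (poch_pos (a := α + 1 + 1) (by linarith) n).ne'
  calc (-1) ^ n * hahnQt n m (α + 1) α m * hahnQt n 0 α (α + 1) m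
      = (-1) ^ n * hahnQ n m (α + 1) α m * hahnQ n 0 α (α + 1) m *
          (√(hahnW 0 α (α + 1) m) * √(hahnW 0 α (α + 1) m)) /
          (√(hahnH n (α + 1) α m) * √(hahnH n α (α + 1) m)) := by
        rw [hahnQt, hahnQt, hW, Nat.cast_zero]; ring
    _ = poch (α + 1) n / poch (α + 1 + 1) n * (poch (α + 1 + 1) m / m.factorial) /
          (poch (2 * α + 2 + n) (m + 1) / ((2 * n + 2 * α + 2) * m.choose n * m.factorial)) := by
        rw [hsqrt, Real.mul_self_sqrt hW_nonneg, hQ, hahnQ_at_zero, mul_one, hahnW_at_zero]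
    _ = _ := by
        rw [poch_succ_left (α + 1) m]
        field_simp
        congr 1
        linear_combination (poch (α + 1 + 1) m * m.choose n) * h₁

lemma sum_neg_one_pow_mul_hahnQt_mul_hahnQt (m : ℕ) {α : ℝ} (hα : -1 < α) :
    ∑ n ∈ range (m + 1), (-1) ^ n * hahnQt n m (α + 1) α m * hahnQt n 0 α (α + 1) m = 1 := by
  rw [sum_congr rfl fun n hn =>
      neg_one_pow_mul_hahnQt_mul_hahnQt (Nat.lt_succ_iff.mp (mem_range.mp hn)) hα,
    ← mul_sum, sum_choose_div_poch m (by linarith), show (2 * α + 2) / 2 = α + 1 by ring]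
  have := (poch_pos (a := α + 1) (by linarith) (m + 1)).ne'
  field_simp

lemma sum_fin_eq_sum_mirror_pairs {M : Type*} [AddCommMonoid M] (m : ℕ)
    (f : Fin (2 * m + 2) → M) :
    ∑ c, f c = ∑ j : Fin (m + 1), (f ⟨m - j, by omega⟩ + f ⟨m + 1 + j, by omega⟩) := by
  let e : Fin (m + 1) ⊕ Fin (m + 1) ≃ Fin (2 * m + 2) :=
    (Equiv.sumCongr Fin.revPerm (Equiv.refl _)).trans (finSumFinEquiv.trans (finCongr (by omega)))
  rw [← e.sum_comp, Fintype.sum_sum_type, sum_add_distrib]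
  congr 1
  exact sum_congr rfl fun j _ => congr_arg f (Fin.ext (by simp [e, Fin.val_rev]))

lemma hahnCorr_last_zero (α β : ℝ) (m : ℕ) (t : ℝ) :
    hahnCorr α β m ⟨2 * m + 1, Nat.lt_succ_self _⟩ ⟨0, Nat.succ_pos _⟩ t =
      -Complex.I * (-1) ^ m * ∑ j ∈ range (m + 1),
        ((hahnQt j m (α + 1) (β - 1) m * hahnQt j 0 α β m *
          Real.sin (t * (2 * √((α + j + 1) * (β + j)))) : ℝ) : ℂ) := by
  rw [hahnCorr, sum_fin_eq_sum_mirror_pairs, mul_sum, ← Fin.sum_univ_eq_sum_range]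
  refine sum_congr rfl fun j _ => ?_
  have hj := j.isLt
  have hlo : m - (j : ℕ) ≤ m := Nat.sub_le m j
  have hhi : ¬ m + 1 + (j : ℕ) ≤ m := by omega
  simp only [hahnU, hahnEps, Matrix.of_apply, if_pos hlo, if_neg hhi,
    Nat.sub_sub_self (Nat.lt_succ_iff.mp hj), show (2 * m + 1) % 2 = 1 by omega,
    show (2 * m + 1) / 2 = m by omega, show m + 1 + (j : ℕ) - m - 1 = j by omega, one_ne_zero,
    if_false, if_true, Nat.zero_div, pow_zero]
  set θ := t * (2 * √((α + j + 1) * (β + j)))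
  have hlo_exp : -Complex.I * t * ((-2 * √((α + j + 1) * (β + j)) : ℝ) : ℂ) = θ * Complex.I := by
    simp only [θ]; push_cast; ring
  have hhi_exp : -Complex.I * t * ((2 * √((α + j + 1) * (β + j)) : ℝ) : ℂ) = -θ * Complex.I := by
    simp only [θ]; push_cast; ring
  have hsin : Complex.sin θ =
      (Complex.exp (-θ * Complex.I) - Complex.exp (θ * Complex.I)) * Complex.I / 2 := by
    rw [← Complex.two_sin]; ring
  set Q' := hahnQt j m (α + 1) (β - 1) m
  set Q := hahnQt j 0 α β m
  have hprod (ε : ℝ) : ε * ((-1) ^ m / √2) * Q' * (1 / √2 * Q) = ε * (-1) ^ m * Q' * Q / 2 := by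
    field_simp
    rw [Real.sq_sqrt zero_le_two]
    ring
  rw [hlo_exp, hhi_exp, hprod, hprod]
  push_cast
  rw [hsin]
  linear_combination (-1) ^ m * Q' * Q *
    (Complex.exp (-θ * Complex.I) - Complex.exp (θ * Complex.I)) / 2 * Complex.I_sq

open Real in
lemma abs_sin_pi_mul_eq_one_iff (x : ℝ) : |sin (π * x)| = 1 ↔ ∃ k : ℤ, x = k + 1 / 2 := by
  rw [abs_eq zero_le_one, ← cos_eq_zero_iff_sin_eq, cos_eq_zero_iff]
  refine exists_congr fun k => ⟨fun h => ?_, fun h => by rw [h]; ring⟩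
  have := pi_pos
  field_simp at h
  linarith

lemma exists_int_eq_add_half_iff {x : ℝ} (hx : -1 < x) :
    (∃ k : ℤ, x = k + 1 / 2) ↔ ∃ l : ℕ, x = l - 1 / 2 := by
  constructor
  · rintro ⟨k, rfl⟩
    have : 0 ≤ k + 1 := by
      have : (-2 : ℝ) < k := by linarith
      have : -2 < k := by exact_mod_cast this
      omega
    refine ⟨(k + 1).toNat, ?_⟩
    rw [← Int.cast_natCast, Int.toNat_of_nonneg this]; push_cast; ring
  · rintro ⟨l, rfl⟩
    exact ⟨l - 1, by push_cast; ring⟩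

open Real in
lemma sin_pi_mul_add_nat_add_one (x : ℝ) (j : ℕ) :
    sin (π * (x + j + 1)) = -(-1) ^ j * sin (π * x) := by
  rw [show π * (x + j + 1) = π * x + (j + 1 : ℕ) * π by push_cast; ring, sin_add_nat_mul_pi,
    pow_succ]
  ring

open Real in
lemma hahnCorr_last_zero_pi_div_two (m : ℕ) {α : ℝ} (hα : -1 < α) :
    hahnCorr α (α + 1) m ⟨2 * m + 1, Nat.lt_succ_self _⟩ ⟨0, Nat.succ_pos _⟩ (π / 2) =
      Complex.I * (-1) ^ m * (sin (π * α) : ℝ) := by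
  have hfreq (j : ℕ) : π / 2 * (2 * √((α + j + 1) * (α + 1 + j))) = π * (α + j + 1) := by
    rw [show (α + j + 1) * (α + 1 + j) = (α + j + 1) ^ 2 by ring,
      Real.sqrt_sq (by linarith [j.cast_nonneg (α := ℝ)])]
    ring
  have hsum : ∑ j ∈ range (m + 1), hahnQt j m (α + 1) α m * hahnQt j 0 α (α + 1) m *
      (-(-1) ^ j * sin (π * α)) = -sin (π * α) := by
    calc _ = -sin (π * α) * ∑ j ∈ range (m + 1),
            (-1) ^ j * hahnQt j m (α + 1) α m * hahnQt j 0 α (α + 1) m := by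
          rw [mul_sum]; exact sum_congr rfl fun j _ => by ring
      _ = _ := by rw [sum_neg_one_pow_mul_hahnQt_mul_hahnQt m hα, mul_one]
  rw [hahnCorr_last_zero, add_sub_cancel_right]
  simp only [hfreq, sin_pi_mul_add_nat_add_one]
  rw [← Complex.ofReal_sum, hsum]
  push_cast
  ring

theorem hahn_perfect_state_transfer_half_period
    (m : ℕ) (α β : ℝ) (hα : α > -1) (hβ : β = α + 1) :
    hahnCorr α β m ⟨2 * m + 1, by omega⟩ ⟨0, by omega⟩ (Real.pi / 2)
      = Complex.I * (-1 : ℂ) ^ m * (Real.sin (Real.pi * α) : ℝ) ∧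
    (‖hahnCorr α β m ⟨2 * m + 1, by omega⟩ ⟨0, by omega⟩ (Real.pi / 2)‖ = 1
      ↔ ∃ l : ℕ, α = (l : ℝ) - 1 / 2) := by
  subst hβ
  have hcorr := hahnCorr_last_zero_pi_div_two m hα
  refine ⟨hcorr, ?_⟩
  rw [hcorr, ← exists_int_eq_add_half_iff hα, ← abs_sin_pi_mul_eq_one_iff]
  simp [-Complex.ofReal_sin]
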